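/- arXiv:1610.05355 — 2 statements merged into one kernel-verified Lean document; each statement's English description precedes it below -/
import Mathlib

section
/- Let T be a triangle with centroid x_T, area |T|, and let φ be the weak function equal to 1 in the interior of T and 0 on ∂T. Then the weak gradient of φ in RT_0(T), defined by (∇_w φ, τ)_T = −(φ_0, ∇·τ)_T + ⟨φ_b, τ·n⟩_{∂T} for all τ ∈ RT_0(T), equals −C_T (x − x_T) where C_T = 2|T| / ‖x − x_T‖²_{L²(T)}. -/
open MeasureTheory
open scoped InnerProductSpace

/-! The affine map `f` of the plane with `A ↦ B ↦ C ↦ A` maps `T` onto itself and fixes the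
centroid `x_T`; its linear part `L` satisfies `1 + L + L² = 0`, hence `L³ = 1` and `det L = 1`.
By change of variables the first moment `M = ∫_T (x - x_T)` satisfies `L M = M`, so
`3 M = M + L M + L² M = 0`. Writing `a + c x = (a + c x_T) + c (x - x_T)`, the integral of
`⟪-C_T (x - x_T), a + c x⟫` is therefore `-C_T c ‖x - x_T‖²_{L²(T)} = -2 c |T|`, which is the
right-hand side `-(1, 2c)_T`. -/

theorem AffineBasis.exists_affineMap_apply_eq {ι k V P V₂ P₂ : Type*} [Fintype ι] [Ring k]
    [AddCommGroup V] [Module k V] [AddTorsor V P] [AddCommGroup V₂] [Module k V₂]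
    [AddTorsor V₂ P₂] (b : AffineBasis ι k P) (q : ι → P₂) :
    ∃ f : P →ᵃ[k] P₂, ∀ i, f (b i) = q i := by
  classical
  refine ⟨(Finset.univ.affineCombination k q).comp b.coords, fun i => ?_⟩
  refine Finset.affineCombination_of_eq_one_of_eq_zero _ _ _ (Finset.mem_univ i) ?_ ?_
  · simp [AffineBasis.coords_apply]
  · intro j _ hj
    simp [AffineBasis.coords_apply, b.coord_apply_ne hj]

theorem LinearMap.comp_comp_self_eq_id_of_cyclic {k E : Type*} [CommRing k] [AddCommGroup E]
    [Module k E] {L : E →ₗ[k] E} (hL : ∀ v, v + L v + L (L v) = 0) : L ∘ₗ L ∘ₗ L = id := by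
  ext v
  show L (L (L v)) = v
  linear_combination (norm := module) hL (L v) - hL v

theorem LinearMap.det_eq_one_of_cyclic {k E : Type*} [Field k] [LinearOrder k]
    [IsStrictOrderedRing k] [AddCommGroup E] [Module k E] {L : E →ₗ[k] E}
    (hL : ∀ v, v + L v + L (L v) = 0) : LinearMap.det L = 1 := by
  have h := congrArg LinearMap.det (comp_comp_self_eq_id_of_cyclic hL)
  rw [LinearMap.det_comp, LinearMap.det_comp, LinearMap.det_id, ← pow_three] at h
  exact ((pow_eq_one_iff_of_ne_zero three_ne_zero).mp h).resolve_right
    fun h => absurd h.2 (by decide)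

section Triangle

variable {k E : Type*} [Field k] [AddCommGroup E] [Module k E] {A B C : E}

theorem exists_affineMap_rotate_triangle (hABC : AffineIndependent k ![A, B, C])
    (hspan : affineSpan k {A, B, C} = ⊤) :
    ∃ f : E →ᵃ[k] E, f A = B ∧ f B = C ∧ f C = A := by
  have hrange : Set.range ![A, B, C] = {A, B, C} := by
    simp only [Matrix.range_cons, Matrix.range_empty, Set.union_empty, Set.singleton_union]
  obtain ⟨f, hf⟩ := (⟨![A, B, C], hABC, hrange ▸ hspan⟩ : AffineBasis (Fin 3) k E)
    |>.exists_affineMap_apply_eq ![B, C, A]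
  exact ⟨f, hf 0, hf 1, hf 2⟩

theorem AffineMap.linear_cyclic_sum_eq_zero (hspan : affineSpan k {A, B, C} = ⊤)
    {f : E →ᵃ[k] E} (hA : f A = B) (hB : f B = C) (hC : f C = A) (v : E) :
    v + f.linear v + f.linear (f.linear v) = 0 := by
  have hker : Submodule.span k ((· -ᵥ A) '' {A, B, C}) ≤
      LinearMap.ker (LinearMap.id + f.linear + f.linear ∘ₗ f.linear) := by
    rw [Submodule.span_le]
    rintro _ ⟨x, hx, rfl⟩
    have hlin : ∀ x y, f.linear (x - y) = f x - f y := f.linearMap_vsub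
    rw [SetLike.mem_coe, LinearMap.mem_ker]
    simp only [Set.mem_insert_iff, Set.mem_singleton_iff] at hx
    rcases hx with rfl | rfl | rfl <;>
      simp only [LinearMap.add_apply, LinearMap.id_apply, LinearMap.comp_apply, vsub_eq_sub,
        hlin, hA, hB, hC, sub_self, map_zero] <;> abel
  have hv : v ∈ Submodule.span k ((· -ᵥ A) '' {A, B, C}) := by
    rw [← vectorSpan_eq_span_vsub_set_right k (by simp), ← direction_affineSpan, hspan,
      AffineSubspace.direction_top]
    trivial
  simpa using hker hv

theorem AffineMap.apply_centroid_of_rotate [CharZero k] {f : E →ᵃ[k] E}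
    (hA : f A = B) (hB : f B = C) (hC : f C = A) :
    f ((3 : k)⁻¹ • (A + B + C)) = (3 : k)⁻¹ • (A + B + C) := by
  have hdecomp : ∀ x, f x = f.linear x + f 0 := fun x => congrFun f.decomp x
  calc f ((3 : k)⁻¹ • (A + B + C))
      = (3 : k)⁻¹ • (f A + f B + f C) := by
        rw [hdecomp, hdecomp A, hdecomp B, hdecomp C, map_smul, map_add, map_add]; module
    _ = (3 : k)⁻¹ • (A + B + C) := by rw [hA, hB, hC]; abel_nf

end Triangle

section Integral

variable {E F : Type*} [NormedAddCommGroup E] [NormedSpace ℝ E] [FiniteDimensional ℝ E]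
  [MeasurableSpace E] [BorelSpace E] [NormedAddCommGroup F] [NormedSpace ℝ F]
  (μ : Measure E) [μ.IsAddHaarMeasure] {T : Set E}

theorem setIntegral_comp_affineMap_of_image_eq (hT : MeasurableSet T) {f : E →ᵃ[ℝ] E}
    (hdet : |LinearMap.det f.linear| = 1) (hfT : f '' T = T) (g : E → F) :
    ∫ x in T, g (f x) ∂μ = ∫ x in T, g x ∂μ := by
  let fc : E →ᴬ[ℝ] E := ⟨f, f.continuous_of_finiteDimensional⟩
  have hinj : Function.Injective f := by
    rw [← f.linear_injective_iff]
    exact (f.linear.equivOfDetNeZero (by intro h; simp [h] at hdet)).injective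
  have h := integral_image_eq_integral_abs_det_fderiv_smul μ hT
    (fun x _ => fc.hasFDerivWithinAt) hinj.injOn g
  rw [show (fc : E → E) = f from rfl, hfT] at h
  rw [h]
  simp [ContinuousLinearMap.det, fc, hdet]

theorem setIntegral_sub_eq_zero_of_cyclic (hT : MeasurableSet T) {f : E →ᵃ[ℝ] E}
    (hcyc : ∀ v, v + f.linear v + f.linear (f.linear v) = 0) (hfT : f '' T = T) {p : E}
    (hp : f p = p) : ∫ x in T, (x - p) ∂μ = 0 := by
  have hL3 := LinearMap.comp_comp_self_eq_id_of_cyclic hcyc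
  let L : E ≃L[ℝ] E := LinearEquiv.toContinuousLinearEquiv <|
    .ofLinearMap (f := f.linear) (g := f.linear ∘ₗ f.linear) hL3
      (by rw [LinearMap.comp_assoc]; exact hL3)
  set M := ∫ x in T, (x - p) ∂μ
  have hfix : L M = M := by
    calc L M = ∫ x in T, L (x - p) ∂μ := (L.integral_comp_comm _).symm
      _ = ∫ x in T, (f x - p) ∂μ := by
        congr 1 with x
        conv_rhs => rw [← hp]
        exact f.linearMap_vsub x p
      _ = M := setIntegral_comp_affineMap_of_image_eq μ hT
        (by rw [LinearMap.det_eq_one_of_cyclic hcyc, abs_one]) hfT (· - p)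
  have h3 : (3 : ℝ) • M = 0 := by
    have h := hcyc M
    change M + L M + L (L M) = 0 at h
    rw [hfix, hfix] at h
    rw [← h]
    module
  exact (smul_eq_zero.mp h3).resolve_left three_ne_zero


theorem setIntegral_sub_centroid_convexHull_eq_zero {A B C : E}
    (hABC : AffineIndependent ℝ ![A, B, C]) (hspan : affineSpan ℝ {A, B, C} = ⊤) :
    ∫ x in convexHull ℝ {A, B, C}, (x - (3 : ℝ)⁻¹ • (A + B + C)) ∂μ = 0 := by
  obtain ⟨f, hA, hB, hC⟩ := exists_affineMap_rotate_triangle hABC hspan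
  have hfT : f '' convexHull ℝ {A, B, C} = convexHull ℝ {A, B, C} := by
    rw [f.image_convexHull, Set.image_insert_eq, Set.image_insert_eq, Set.image_singleton,
      hA, hB, hC, Set.pair_comm, Set.insert_comm]
  exact setIntegral_sub_eq_zero_of_cyclic μ
    ((Set.toFinite {A, B, C}).isCompact_convexHull (𝕜 := ℝ)).isClosed.measurableSet
    (f.linear_cyclic_sum_eq_zero hspan hA hB hC) hfT (f.apply_centroid_of_rotate hA hB hC)

end Integral

theorem measure_convexHull_pos {E : Type*} [NormedAddCommGroup E] [NormedSpace ℝ E]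
    [FiniteDimensional ℝ E] [MeasurableSpace E] (μ : Measure E) [μ.IsOpenPosMeasure]
    {s : Set E} (hs : affineSpan ℝ s = ⊤) : 0 < μ (convexHull ℝ s) :=
  (isOpen_interior.measure_pos μ (interior_convexHull_nonempty_iff_affineSpan_eq_top.mpr hs)
    ).trans_le (measure_mono interior_subset)

theorem setIntegral_norm_sub_sq_pos {E : Type*} [NormedAddCommGroup E] [MeasurableSpace E]
    [OpensMeasurableSpace E] {μ : Measure E} [IsFiniteMeasureOnCompacts μ] [NullSingletonClass μ]
    {T : Set E} (hT : IsCompact T) (hμT : 0 < μ T) (p : E) :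
    0 < ∫ x in T, ‖x - p‖ ^ 2 ∂μ := by
  have hint : IntegrableOn (fun x => ‖x - p‖ ^ 2) T μ :=
    (by fun_prop : Continuous fun x => ‖x - p‖ ^ 2).continuousOn.integrableOn_compact hT
  rw [setIntegral_pos_iff_support_of_nonneg_ae (.of_forall fun x => by positivity) hint]
  have hsupp : Function.support (fun x => ‖x - p‖ ^ 2) = {p}ᶜ := by
    ext x
    simp [sub_eq_zero]
  rw [hsupp, Set.inter_comm, ← Set.sdiff_eq, measure_sdiff_null (measure_singleton p)]
  exact hμT

theorem setIntegral_inner_smul_sub_eq {E : Type*} [NormedAddCommGroup E]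
    [InnerProductSpace ℝ E] [CompleteSpace E] [MeasurableSpace E] [OpensMeasurableSpace E]
    {μ : Measure E} [IsFiniteMeasureOnCompacts μ] {T : Set E} (hT : IsCompact T) {p : E}
    (hp : ∫ x in T, (x - p) ∂μ = 0) (κ c : ℝ) (a : E) :
    ∫ x in T, ⟪κ • (x - p), a + c • x⟫_ℝ ∂μ = κ * c * ∫ x in T, ‖x - p‖ ^ 2 ∂μ := by
  have hint : IntegrableOn (fun x => x - p) T μ :=
    (by fun_prop : Continuous fun x => x - p).continuousOn.integrableOn_compact hT
  have hsq : IntegrableOn (fun x => ‖x - p‖ ^ 2) T μ :=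
    (by fun_prop : Continuous fun x => ‖x - p‖ ^ 2).continuousOn.integrableOn_compact hT
  have hlin : ∫ x in T, ⟪a + c • p, x - p⟫_ℝ ∂μ = 0 := by
    rw [integral_inner hint, hp, inner_zero_right]
  have hsplit : ∀ x, ⟪κ • (x - p), a + c • x⟫_ℝ
      = κ * ⟪a + c • p, x - p⟫_ℝ + κ * c * ‖x - p‖ ^ 2 := by
    intro x
    rw [show a + c • x = (a + c • p) + c • (x - p) by module, real_inner_smul_left,
      inner_add_right, real_inner_smul_right, real_inner_self_eq_norm_sq, real_inner_comm]
    ring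
  simp_rw [hsplit]
  rw [integral_add ((hint.const_inner (a + c • p)).const_mul κ) (hsq.const_mul _),
    integral_const_mul, integral_const_mul, hlin, mul_zero, zero_add]

/-- Weak gradient of the interior basis function: let `T` be a triangle with
vertices `A, B, C`, centroid `x_T` and area `|T|`, and let `φ = {1, 0}` be the
weak function equal to `1` in the interior of `T` and `0` on `∂T`.  Then the
function `x ↦ -C_T (x - x_T)` with `C_T = 2|T| / ‖x - x_T‖²_{L²(T)}` (which
belongs to `RT₀(T)`) satisfies the defining equation of the weak gradient:
for every `τ ∈ RT₀(T)`, i.e. `τ(x) = a + c x` (for which `∇·τ = 2c` and the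
boundary term vanishes since `φ_b = 0`),
`(∇_w φ, τ)_T = -(φ₀, ∇·τ)_T`. -/
theorem weak_gradient_interior_basis
    (A B C : EuclideanSpace ℝ (Fin 2))
    (hABC : AffineIndependent ℝ ![A, B, C])
    (T : Set (EuclideanSpace ℝ (Fin 2)))
    (hT : T = convexHull ℝ {A, B, C})
    (xT : EuclideanSpace ℝ (Fin 2)) (hxT : xT = (3:ℝ)⁻¹ • (A + B + C))
    (areaT : ℝ) (hareaT : areaT = (volume T).toReal)
    (CT : ℝ) (hCT : CT = 2 * areaT / ∫ x in T, ‖x - xT‖ ^ 2) :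
    ∀ (a : EuclideanSpace ℝ (Fin 2)) (c : ℝ),
      ∫ x in T, ⟪-CT • (x - xT), a + c • x⟫_ℝ
        = -(∫ _x in T, (1 : ℝ) * (2 * c)) := by
  intro a c
  subst hT hxT hareaT hCT
  have hspan : affineSpan ℝ {A, B, C} = ⊤ := by
    simpa only [Matrix.range_cons, Matrix.range_empty, Set.union_empty, Set.singleton_union]
      using hABC.affineSpan_eq_top_iff_card_eq_finrank_add_one.mpr (by simp)
  have hcompact : IsCompact (convexHull ℝ {A, B, C}) :=
    (Set.toFinite {A, B, C}).isCompact_convexHull (𝕜 := ℝ)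
  have hmoment := setIntegral_sub_centroid_convexHull_eq_zero volume hABC hspan
  have hK := setIntegral_norm_sub_sq_pos hcompact (measure_convexHull_pos volume hspan)
    ((3 : ℝ)⁻¹ • (A + B + C))
  rw [setIntegral_inner_smul_sub_eq hcompact hmoment, setIntegral_const, smul_eq_mul,
    measureReal_def]
  generalize (∫ x in convexHull ℝ {A, B, C}, ‖x - (3 : ℝ)⁻¹ • (A + B + C)‖ ^ 2) = K at hK ⊢
  field_simp
end

section
/- The functional ⦀v⦀ = (Σ_T ‖∇_w v‖²_T)^{1/2} is a norm on the space V_h^0: if the equivalent quantity ‖v‖_{1,h}² = Σ_T (‖∇v_0‖²_T + h_T^{-1}‖v_0 − v_b‖²_{∂T}) vanishes for v ∈ V_h^0, then v = 0. Specifically: ∇v_0 = 0 on each T forces v_0 constant per element; v_0 = v_b on each interior edge forces v_0 to be globally constant on a connected domain; and v_b = 0 on ∂Ω forces the constant to be zero. -/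
theorem SimpleGraph.Reachable.apply_eq_of_adj {V α : Type*} {G : SimpleGraph V} {f : V → α}
    (hf : ∀ u v, G.Adj u v → f u = f v) {u v : V} (h : G.Reachable u v) : f u = f v := by
  obtain ⟨w⟩ := h
  induction w with
  | nil => rfl
  | cons hadj _ ih => exact (hf _ _ hadj).trans ih

theorem triple_bar_is_norm_on_Vh0_general
    (ι : Type*)  -- elements of the triangulation
    (G : SimpleGraph ι) (hconn : G.Preconnected)  -- adjacency through interior edges
    (E : Type*) [NormedAddCommGroup E]
    (v0 : ι → E)  -- elementwise constant value of v₀ (∇v₀ = 0 on each element)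
    (vb : ι → ι → E)  -- single value of v_b on the edge shared by adjacent elements
    (hv0vb : ∀ i j, G.Adj i j → v0 i = vb i j ∧ v0 j = vb i j)  -- v₀ = v_b on interior edges
    (i0 : ι) (hbdry : v0 i0 = 0)  -- v_b = 0 on ∂Ω forces v₀ = 0 on a boundary element
    : (∀ i, v0 i = 0) ∧ (∀ i j, G.Adj i j → vb i j = 0) := by
  have hadj : ∀ i j, G.Adj i j → v0 i = v0 j := fun i j h =>
    (hv0vb i j h).1.trans (hv0vb i j h).2.symm
  have hv0 : ∀ i, v0 i = 0 := fun i =>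
    ((hconn i0 i).apply_eq_of_adj hadj).symm.trans hbdry
  exact ⟨hv0, fun i j h => (hv0vb i j h).1.symm.trans (hv0 i)⟩

/-- Positive-definiteness of the discrete `H¹`-like seminorm on `V_h⁰`: if
`‖v‖_{1,h}² = Σ_T (‖∇v₀‖²_T + h_T⁻¹‖v₀ − v_b‖²_{∂T})` vanishes for
`v = {v₀, v_b} ∈ V_h⁰`, then `v = 0`.  Vanishing of the seminorm means:
`∇v₀ = 0` on each element, so `v₀` is a constant on each element (modelled by
`v0 : ι → E`); `v₀ = v_b` on each interior edge shared by two adjacent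
elements; and `v_b = 0` on boundary edges.  Since the domain is connected
(the adjacency graph `G` of the triangulation is preconnected) and some
element `i₀` touches the boundary, `v₀` and `v_b` vanish identically, so
`⦀·⦀` (equivalent to `‖·‖_{1,h}`) is a norm on `V_h⁰`. -/
theorem triple_bar_is_norm_on_Vh0
    (ι : Type*) [Fintype ι] [Nonempty ι]  -- elements of the triangulation
    (G : SimpleGraph ι) (hconn : G.Preconnected)  -- adjacency through interior edges
    (E : Type*) [NormedAddCommGroup E] [NormedSpace ℝ E]
    (v0 : ι → E)  -- elementwise constant value of v₀ (∇v₀ = 0 on each element)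
    (vb : ι → ι → E)  -- single value of v_b on the edge shared by adjacent elements
    (hv0vb : ∀ i j, G.Adj i j → v0 i = vb i j ∧ v0 j = vb i j)  -- v₀ = v_b on interior edges
    (i0 : ι) (hbdry : v0 i0 = 0)  -- v_b = 0 on ∂Ω forces v₀ = 0 on a boundary element
    : (∀ i, v0 i = 0) ∧ (∀ i j, G.Adj i j → vb i j = 0) :=
  triple_bar_is_norm_on_Vh0_general ι G hconn E v0 vb hv0vb i0 hbdry
end
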